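/- arXiv:2004.09221 — 6 statements merged into one kernel-verified Lean document; each statement's English description precedes it below -/
import Mathlib

section
/- Let Γ be a connected r-regular graph with adjacency matrix A, and define polynomials F_0(x)=1, F_1(x)=x, F_2(x)=x²−r, and F_j(x)=xF_{j−1}(x)−(r−1)F_{j−2}(x) for j ≥ 3. Then for any vertices u, v and any nonnegative integer ℓ, the (u,v) entry of F_ℓ(A) equals the number of non-backtracking walks of length ℓ from u to v. -/
open Polynomial

/-- The orthogonal polynomials `F_j` with parameter `r`:
`F_0 = 1`, `F_1 = x`, `F_2 = x² - r`, `F_j = x F_{j-1} - (r-1) F_{j-2}` for `j ≥ 3`. -/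
noncomputable def Fpoly (r : ℝ) : ℕ → Polynomial ℝ
  | 0 => 1
  | 1 => X
  | 2 => X ^ 2 - C r
  | (j + 3) => X * Fpoly r (j + 2) - C (r - 1) * Fpoly r (j + 1)

/-- The number of non-backtracking walks of length `ℓ` from `u` to `v` in `G`, encoded as
sequences `w : Fin (ℓ+1) → V` with `w 0 = u`, `w ℓ = v`, consecutive vertices adjacent,
and `w i ≠ w (i+2)`. -/
noncomputable def nbWalkCount {V : Type*} [Fintype V] (G : SimpleGraph V) (ℓ : ℕ) (u v : V) :
    ℕ :=
  Set.ncard {w : Fin (ℓ + 1) → V |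
    w 0 = u ∧ w (Fin.last ℓ) = v ∧
    (∀ i : Fin ℓ, G.Adj (w i.castSucc) (w i.succ)) ∧
    ∀ (i : ℕ) (h : i + 2 < ℓ + 1), w ⟨i, by omega⟩ ≠ w ⟨i + 2, h⟩}

/-!
Write `N_ℓ` for the matrix of non-backtracking walk counts. Prepending a neighbour `u` of `x` to
a non-backtracking walk from `x` yields a non-backtracking walk from `u` unless the second vertex
of the walk is `u`. Counting these backtracking extensions gives `A N_1 = N_2 + r I` and
`A N_{ℓ+2} = N_{ℓ+3} + (r - 1) N_{ℓ+1}` for an `r`-regular graph, which is the recurrence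
defining `F_ℓ`, so `F_ℓ(A) = N_ℓ`.
-/

open Finset

theorem aeval_Fpoly_eq_of_recurrence {A : Type*} [Ring A] [Algebra ℝ A] (r : ℝ) (a : A)
    (M : ℕ → A) (h0 : M 0 = 1) (h1 : M 1 = a) (h2 : a ^ 2 = M 2 + r • 1)
    (hrec : ∀ j, a * M (j + 2) = M (j + 3) + (r - 1) • M (j + 1)) (j : ℕ) :
    aeval a (Fpoly r j) = M j := by
  induction j using Fpoly.induct with
  | case1 => simp [Fpoly, h0]
  | case2 => simp [Fpoly, h1]
  | case3 => simp [Fpoly, h2, Algebra.algebraMap_eq_smul_one]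
  | case4 j ih2 ih1 =>
    rw [Fpoly, eq_sub_of_add_eq (hrec j).symm, ← ih2, ← ih1]
    simp [Algebra.smul_def]

namespace SimpleGraph

variable {V : Type*} (G : SimpleGraph V)

def IsNonBacktrackingWalk {ℓ : ℕ} (w : Fin (ℓ + 1) → V) : Prop :=
  (∀ i : Fin ℓ, G.Adj (w i.castSucc) (w i.succ)) ∧
    ∀ (i : ℕ) (h : i + 2 < ℓ + 1), w ⟨i, by omega⟩ ≠ w ⟨i + 2, h⟩

variable {G}

theorem isNonBacktrackingWalk_zero (w : Fin 1 → V) : G.IsNonBacktrackingWalk w :=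
  ⟨fun i => i.elim0, fun _ _ => by omega⟩

theorem isNonBacktrackingWalk_cons_iff {ℓ : ℕ} (x : V) (w : Fin (ℓ + 2) → V) :
    G.IsNonBacktrackingWalk (Fin.cons x w : Fin (ℓ + 3) → V) ↔
      G.Adj x (w 0) ∧ x ≠ w 1 ∧ G.IsNonBacktrackingWalk w := by
  have hcons_two : (Fin.cons x w : Fin (ℓ + 3) → V) ⟨2, by omega⟩ = w 1 :=
    (Fin.cons_succ (α := fun _ => V) x w ⟨1, by omega⟩).trans (congrArg w Fin.mk_one)
  unfold IsNonBacktrackingWalk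
  rw [Fin.forall_fin_succ]
  simp only [Fin.castSucc_zero, Fin.cons_zero, Fin.cons_succ, ← Fin.succ_castSucc]
  constructor
  · rintro ⟨⟨hx, hadj⟩, hnb⟩
    refine ⟨hx, ?_, hadj, fun i h => hnb (i + 1) (by omega)⟩
    rw [← hcons_two]
    exact hnb 0 (by omega)
  · rintro ⟨hx, hx1, hadj, hnb⟩
    refine ⟨⟨hx, hadj⟩, fun i h => ?_⟩
    cases i with
    | zero => rw [hcons_two]; exact hx1
    | succ i => exact hnb i (by omega)

variable [Fintype V]

variable (G) in
noncomputable def nonBacktrackingWalks (ℓ : ℕ) (u v : V) : Finset (Fin (ℓ + 1) → V) := by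
  classical exact {w | w 0 = u ∧ w (Fin.last ℓ) = v ∧ G.IsNonBacktrackingWalk w}

theorem mem_nonBacktrackingWalks {ℓ : ℕ} {u v : V} {w : Fin (ℓ + 1) → V} :
    w ∈ G.nonBacktrackingWalks ℓ u v ↔
      w 0 = u ∧ w (Fin.last ℓ) = v ∧ G.IsNonBacktrackingWalk w := by
  simp [nonBacktrackingWalks]

variable (G) in
theorem nbWalkCount_eq_card (ℓ : ℕ) (u v : V) :
    nbWalkCount G ℓ u v = #(G.nonBacktrackingWalks ℓ u v) := by
  rw [nbWalkCount, ← Set.ncard_coe_finset]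
  congr 1
  ext w
  simp [mem_nonBacktrackingWalks, IsNonBacktrackingWalk]

theorem cons_mem_nonBacktrackingWalks {ℓ : ℕ} {u v y : V} {w : Fin (ℓ + 2) → V} :
    (Fin.cons y w : Fin (ℓ + 3) → V) ∈ G.nonBacktrackingWalks (ℓ + 2) u v ↔
      y = u ∧ G.Adj u (w 0) ∧ u ≠ w 1 ∧ w ∈ G.nonBacktrackingWalks (ℓ + 1) (w 0) v := by
  simp only [mem_nonBacktrackingWalks, isNonBacktrackingWalk_cons_iff, Fin.cons_zero,
    Fin.cons_last, true_and]
  constructor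
  · rintro ⟨rfl, hv, hadj, hne, hw⟩
    exact ⟨rfl, hadj, hne, hv, hw⟩
  · rintro ⟨rfl, hadj, hne, hv, hw⟩
    exact ⟨rfl, hv, hadj, hne, hw⟩

theorem adj_of_mem_nonBacktrackingWalks {ℓ : ℕ} {u v : V} {w : Fin (ℓ + 2) → V}
    (hw : w ∈ G.nonBacktrackingWalks (ℓ + 1) u v) : G.Adj u (w 1) := by
  obtain ⟨rfl, -, hadj, -⟩ := mem_nonBacktrackingWalks.mp hw
  exact hadj 0

variable (G) in
theorem card_nonBacktrackingWalks_one [DecidableRel G.Adj] (u v : V) :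
    #(G.nonBacktrackingWalks 1 u v) = if G.Adj u v then 1 else 0 := by
  split_ifs with h
  · refine card_eq_one.mpr ⟨![u, v], ?_⟩
    ext w
    simp +contextual [mem_nonBacktrackingWalks, IsNonBacktrackingWalk, funext_iff,
      Fin.forall_fin_two, h]
  · refine card_eq_zero.mpr (eq_empty_of_forall_notMem fun w hw => h ?_)
    obtain ⟨rfl, rfl, hadj, -⟩ := mem_nonBacktrackingWalks.mp hw
    exact hadj 0

variable (R : Type*)

variable (G) in
noncomputable def nbWalkMatrix [NatCast R] (ℓ : ℕ) : Matrix V V R :=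
  Matrix.of fun u v => (nbWalkCount G ℓ u v : R)

theorem nbWalkMatrix_one [DecidableRel G.Adj] [AddMonoidWithOne R] :
    G.nbWalkMatrix R 1 = G.adjMatrix R := by
  ext u v
  simp only [nbWalkMatrix, Matrix.of_apply, nbWalkCount_eq_card, card_nonBacktrackingWalks_one,
    adjMatrix_apply]
  split_ifs <;> simp

variable [DecidableEq V]

variable (G) in
theorem card_nonBacktrackingWalks_zero (u v : V) :
    #(G.nonBacktrackingWalks 0 u v) = if u = v then 1 else 0 := by
  split_ifs with h
  · subst h
    refine card_eq_one.mpr ⟨fun _ => u, ?_⟩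
    ext w
    simp [mem_nonBacktrackingWalks, isNonBacktrackingWalk_zero, funext_iff, Fin.forall_fin_one]
  · refine card_eq_zero.mpr (eq_empty_of_forall_notMem fun w hw => h ?_)
    obtain ⟨rfl, rfl, -⟩ := mem_nonBacktrackingWalks.mp hw
    rfl

theorem nbWalkMatrix_zero [AddMonoidWithOne R] : G.nbWalkMatrix R 0 = 1 := by
  ext u v
  simp only [nbWalkMatrix, Matrix.of_apply, nbWalkCount_eq_card, card_nonBacktrackingWalks_zero,
    Matrix.one_apply]
  split_ifs <;> simp

theorem card_filter_nonBacktrackingWalks_snd_eq {ℓ : ℕ} {u v x : V} (h : G.Adj u x) :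
    #{w ∈ G.nonBacktrackingWalks (ℓ + 2) u v | w 1 = x} =
      #{w ∈ G.nonBacktrackingWalks (ℓ + 1) x v | w 1 ≠ u} := by
  refine card_nbij' Fin.tail (fun s => (Fin.cons u s : Fin (ℓ + 3) → V)) ?_ ?_ ?_ ?_
  · intro w hw
    induction w using Fin.consCases with | cons y s => ?_
    simp only [coe_filter, Set.mem_ofPred_eq, cons_mem_nonBacktrackingWalks, Fin.cons_one,
      Fin.tail_cons] at hw ⊢
    obtain ⟨⟨rfl, -, hne, hs⟩, rfl⟩ := hw
    exact ⟨hs, hne.symm⟩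
  · intro s hs
    simp only [coe_filter, Set.mem_ofPred_eq, cons_mem_nonBacktrackingWalks, Fin.cons_one,
      true_and] at hs ⊢
    obtain ⟨hs, hne⟩ := hs
    obtain rfl : s 0 = x := (mem_nonBacktrackingWalks.mp hs).1
    exact ⟨⟨h, Ne.symm hne, hs⟩, rfl⟩
  · intro w hw
    induction w using Fin.consCases with | cons y s => ?_
    simp only [coe_filter, Set.mem_ofPred_eq, cons_mem_nonBacktrackingWalks] at hw
    rw [hw.1.1, Fin.tail_cons]
  · intro s _
    simp

variable [DecidableRel G.Adj] {R}

theorem sum_card_nonBacktrackingWalks (ℓ : ℕ) (u v : V) :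
    ∑ x ∈ G.neighborFinset u, #(G.nonBacktrackingWalks (ℓ + 1) x v) =
      #(G.nonBacktrackingWalks (ℓ + 2) u v) +
        ∑ x ∈ G.neighborFinset u, #{w ∈ G.nonBacktrackingWalks (ℓ + 1) x v | w 1 = u} := by
  have hfib : #(G.nonBacktrackingWalks (ℓ + 2) u v) =
      ∑ x ∈ G.neighborFinset u, #{w ∈ G.nonBacktrackingWalks (ℓ + 1) x v | w 1 ≠ u} := by
    rw [card_eq_sum_card_fiberwise (f := fun w => w 1) fun w hw =>
      (mem_neighborFinset ..).2 (adj_of_mem_nonBacktrackingWalks hw)]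
    exact sum_congr rfl fun x hx =>
      card_filter_nonBacktrackingWalks_snd_eq ((mem_neighborFinset ..).1 hx)
  rw [hfib, ← sum_add_distrib]
  exact sum_congr rfl fun x _ => (card_filter_add_card_filter_not _).symm.trans (add_comm ..)

theorem sum_card_filter_nonBacktrackingWalks_one (u v : V) :
    ∑ x ∈ G.neighborFinset u, #{w ∈ G.nonBacktrackingWalks 1 x v | w 1 = u} =
      if u = v then G.degree u else 0 := by
  split_ifs with huv
  · subst huv
    calc ∑ x ∈ G.neighborFinset u, #{w ∈ G.nonBacktrackingWalks 1 x u | w 1 = u}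
        = ∑ x ∈ G.neighborFinset u, 1 := sum_congr rfl fun x hx => by
          rw [filter_true_of_mem (p := fun w : Fin 2 → V => w 1 = u) fun w hw =>
              (mem_nonBacktrackingWalks.mp hw).2.1,
            card_nonBacktrackingWalks_one, if_pos ((mem_neighborFinset ..).1 hx).symm]
      _ = G.degree u := by rw [sum_const, smul_eq_mul, mul_one, card_neighborFinset_eq_degree]
  · refine sum_eq_zero fun x _ => card_eq_zero.mpr (filter_false_of_mem fun w hw hu => huv ?_)
    exact hu ▸ (mem_nonBacktrackingWalks.mp hw).2.1

/-- A walk `x, u, s₁, …` backtracks only when `x = s₁`, so every walk `s` from `u` has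
`deg u - 1` backtracking extensions; stated additively to avoid truncated subtraction. -/
theorem sum_card_filter_nonBacktrackingWalks_add (ℓ : ℕ) (u v : V) :
    ∑ x ∈ G.neighborFinset u, #{w ∈ G.nonBacktrackingWalks (ℓ + 2) x v | w 1 = u} +
        #(G.nonBacktrackingWalks (ℓ + 1) u v) =
      G.degree u * #(G.nonBacktrackingWalks (ℓ + 1) u v) := by
  set W := G.nonBacktrackingWalks (ℓ + 1) u v
  have hfib : #W = ∑ x ∈ G.neighborFinset u, #{w ∈ W | w 1 = x} :=
    card_eq_sum_card_fiberwise fun w hw =>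
      (mem_neighborFinset ..).2 (adj_of_mem_nonBacktrackingWalks hw)
  calc _ = ∑ x ∈ G.neighborFinset u, (#{w ∈ W | w 1 ≠ x} + #{w ∈ W | w 1 = x}) := by
        rw [sum_add_distrib, ← hfib]
        congr 1
        exact sum_congr rfl fun x hx =>
          card_filter_nonBacktrackingWalks_snd_eq ((mem_neighborFinset ..).1 hx).symm
    _ = ∑ _x ∈ G.neighborFinset u, #W :=
        sum_congr rfl fun x _ => (add_comm ..).trans (card_filter_add_card_filter_not _)
    _ = G.degree u * #W := by rw [sum_const, smul_eq_mul, card_neighborFinset_eq_degree]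

theorem adjMatrix_sq_eq_nbWalkMatrix_two [Semiring R] {r : ℕ} (hreg : G.IsRegularOfDegree r) :
    G.adjMatrix R ^ 2 = G.nbWalkMatrix R 2 + (r : R) • 1 := by
  ext u v
  rw [sq]
  nth_rw 2 [← nbWalkMatrix_one]
  rw [adjMatrix_mul_apply]
  simp only [nbWalkMatrix, Matrix.of_apply, nbWalkCount_eq_card, Matrix.add_apply,
    Matrix.smul_apply, Matrix.one_apply]
  rw [← Nat.cast_sum, sum_card_nonBacktrackingWalks 0 u v,
    sum_card_filter_nonBacktrackingWalks_one, hreg u]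
  split_ifs <;> simp

theorem adjMatrix_mul_nbWalkMatrix [Ring R] {r : ℕ} (hreg : G.IsRegularOfDegree r) (ℓ : ℕ) :
    G.adjMatrix R * G.nbWalkMatrix R (ℓ + 2) =
      G.nbWalkMatrix R (ℓ + 3) + ((r : R) - 1) • G.nbWalkMatrix R (ℓ + 1) := by
  ext u v
  have hback := congrArg (Nat.cast (R := R))
    (sum_card_filter_nonBacktrackingWalks_add (G := G) ℓ u v)
  rw [Nat.cast_add, Nat.cast_mul, hreg u] at hback
  rw [adjMatrix_mul_apply]
  simp only [nbWalkMatrix, Matrix.of_apply, nbWalkCount_eq_card, Matrix.add_apply,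
    Matrix.smul_apply, smul_eq_mul]
  rw [← Nat.cast_sum, sum_card_nonBacktrackingWalks (ℓ + 1) u v, Nat.cast_add, sub_one_mul,
    ← hback, add_sub_cancel_right]

end SimpleGraph

theorem singleton_nonbacktracking_general (r : ℕ) {V : Type*} [Fintype V] [DecidableEq V]
    (G : SimpleGraph V) [DecidableRel G.Adj]
    (hreg : G.IsRegularOfDegree r)
    (ℓ : ℕ) (u v : V) :
    (Polynomial.aeval (G.adjMatrix ℝ)) (Fpoly r ℓ) u v = nbWalkCount G ℓ u v := by
  rw [aeval_Fpoly_eq_of_recurrence r (G.adjMatrix ℝ) (G.nbWalkMatrix ℝ) (G.nbWalkMatrix_zero ℝ)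
    (G.nbWalkMatrix_one ℝ) (G.adjMatrix_sq_eq_nbWalkMatrix_two hreg)
    (G.adjMatrix_mul_nbWalkMatrix hreg)]
  rfl

theorem singleton_nonbacktracking (r : ℕ) {V : Type*} [Fintype V] [DecidableEq V]
    (G : SimpleGraph V) [DecidableRel G.Adj]
    (hconn : G.Connected) (hreg : G.IsRegularOfDegree r)
    (ℓ : ℕ) (u v : V) :
    (Polynomial.aeval (G.adjMatrix ℝ)) (Fpoly r ℓ) u v = nbWalkCount G ℓ u v :=
  singleton_nonbacktracking_general r G hreg ℓ u v
end

section
/- Let Γ be a connected r-regular graph with v vertices and distinct adjacency eigenvalues θ_1 = r > θ_2 > ... > θ_d. Suppose f(x) = ∑_{i=0}^{t} f_i F_i(x) is a polynomial with f(r) > 0, f(θ_i) ≤ 0 for all 2 ≤ i ≤ d, f_0 > 0, and f_i ≥ 0 for all 1 ≤ i ≤ t. Then v ≤ f(r)/f_0. -/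
/-!
Let `A` be the adjacency matrix and write `p = ∑ fᵢ Fᵢ`. With `S`, `T` the tail and head
incidence matrices between vertices and darts and `B` the non-backtracking matrix on darts,
`B + P = Tᵀ S` for the dart-reversal matrix `P`, whence `S B + T = A S` and `T B + S = r S`. These
give Singleton's identity `Fₗ(A) = S Bˡ⁻¹ Tᵀ` for `ℓ ≥ 1`, a matrix of walk counts, so
`tr p(A) ≥ f₀ tr F₀(A) = v f₀`. On the other hand `tr p(A)` is the sum of `p` over the eigenvalues
of `A` with multiplicity. An eigenvector for `r` lies in the kernel of the Laplacian, hence is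
constant on the connected graph, so `r` has multiplicity at most one; every other eigenvalue is
some `θᵢ` with `i ≥ 2`, where `p ≤ 0`. Hence `v f₀ ≤ tr p(A) ≤ p(r)`.
-/

open Polynomial

open Matrix Finset

lemma Matrix.IsHermitian.trace_aeval {𝕜 n : Type*} [RCLike 𝕜] [Fintype n] [DecidableEq n]
    {A : Matrix n n 𝕜} (hA : A.IsHermitian) (q : ℝ[X]) :
    (aeval A q).trace = ∑ i, ((q.eval (hA.eigenvalues i) : ℝ) : 𝕜) := by
  rw [← cfc_polynomial q A hA.isSelfAdjoint, hA.cfc_eq, IsHermitian.cfc,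
    Unitary.conjStarAlgAut_apply, trace_mul_cycle, Unitary.coe_star_mul_self, one_mul,
    trace_diagonal]
  rfl

lemma Orthonormal.eq_of_forall_apply_eq {ι V : Type*} [Fintype V] {v : ι → EuclideanSpace ℝ V}
    (hv : Orthonormal ℝ v) {i j : ι} (hi : ∀ a b, v i a = v i b) (hj : ∀ a b, v j a = v j b) :
    i = j := by
  classical
  by_contra hij
  obtain ⟨u, -⟩ : ∃ u, v i u ≠ 0 := by
    by_contra! h
    exact hv.ne_zero i (by ext u; simp [h u])
  have hinner : ∀ k l, (∀ a b, v k a = v k b) → (∀ a b, v l a = v l b) →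
      inner ℝ (v k) (v l) = Fintype.card V * (v k u * v l u) := by
    intro k l hk hl
    simp [PiLp.inner_apply, hk _ u, hl _ u, mul_comm]
  have hii := hinner i i hi hi
  have hjj := hinner j j hj hj
  have hij' := hinner i j hi hj
  rw [orthonormal_iff_ite.1 hv, if_pos rfl] at hii hjj
  rw [orthonormal_iff_ite.1 hv, if_neg hij] at hij'
  -- Equality in Cauchy–Schwarz: two constant unit vectors have inner product `± 1`.
  have hcs : (Fintype.card V * (v i u * v j u)) ^ 2 =
      (Fintype.card V * (v i u * v i u)) * (Fintype.card V * (v j u * v j u)) := by ring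
  rw [← hij', ← hii, ← hjj] at hcs
  norm_num at hcs

lemma Fintype.sum_comp_le_of_card_fiber_le_one {ι α M : Type*} [Fintype ι] [DecidableEq α]
    [AddCommMonoid M] [PartialOrder M] [IsOrderedAddMonoid M] (x : ι → α) (g : α → M) (a : α)
    (hcard : #{i | x i = a} ≤ 1) (ha : 0 ≤ g a) (hle : ∀ i, x i ≠ a → g (x i) ≤ 0) :
    ∑ i, g (x i) ≤ g a := by
  rw [← sum_filter_add_sum_filter_not univ (fun i => x i = a)]
  have hfiber : ∑ i ∈ {i | x i = a}, g (x i) ≤ g a := by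
    rw [Finset.sum_congr rfl fun i hi => by rw [(mem_filter.1 hi).2], Finset.sum_const]
    simpa using nsmul_le_nsmul_left ha hcard
  have hrest : ∑ i ∈ {i | x i ≠ a}, g (x i) ≤ 0 :=
    Finset.sum_nonpos fun i hi => hle i (mem_filter.1 hi).2
  simpa using add_le_add hfiber hrest

namespace SimpleGraph

variable {V : Type*} [Fintype V] [DecidableEq V] (G : SimpleGraph V) (R : Type*)

def dartFstMatrix [Zero R] [One R] : Matrix V G.Dart R :=
  of fun u d => if d.fst = u then 1 else 0

def dartSndMatrix [Zero R] [One R] : Matrix V G.Dart R :=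
  of fun u d => if d.snd = u then 1 else 0

def dartSymmMatrix [Zero R] [One R] : Matrix G.Dart G.Dart R :=
  of fun d e => if d = e.symm then 1 else 0

def nonBacktrackingMatrix [Zero R] [One R] : Matrix G.Dart G.Dart R :=
  of fun d e => if d.snd = e.fst ∧ d ≠ e.symm then 1 else 0

variable {R} [Semiring R]

lemma nonBacktrackingMatrix_add_dartSymmMatrix :
    G.nonBacktrackingMatrix R + G.dartSymmMatrix R =
      (G.dartSndMatrix R)ᵀ * G.dartFstMatrix R := by
  ext d e
  by_cases h : d = e.symm
  · subst h; simp [mul_apply, nonBacktrackingMatrix, dartSymmMatrix, dartSndMatrix, dartFstMatrix]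
  · simp [h, mul_apply, nonBacktrackingMatrix, dartSymmMatrix, dartSndMatrix, dartFstMatrix]

variable [DecidableRel G.Adj]

lemma card_dart_eq_ite_adj (u v : V) :
    #{d : G.Dart | d.fst = u ∧ d.snd = v} = if G.Adj u v then 1 else 0 := by
  split_ifs with h
  · rw [card_eq_one]
    exact ⟨⟨(u, v), h⟩, by ext d; simp [Dart.ext_iff, Prod.ext_iff]⟩
  · rw [card_eq_zero, filter_eq_empty_iff]
    rintro d - ⟨rfl, rfl⟩
    exact h d.adj

lemma card_dart_snd_eq_degree (u : V) : #{d : G.Dart | d.snd = u} = G.degree u := by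
  rw [← dart_fst_fiber_card_eq_degree]
  exact card_equiv (Dart.symm_involutive.toPerm _) (by simp)

lemma dartFstMatrix_mul_transpose_dartSndMatrix :
    G.dartFstMatrix R * (G.dartSndMatrix R)ᵀ = G.adjMatrix R := by
  ext u v
  simp only [mul_apply, transpose_apply, dartFstMatrix, dartSndMatrix, of_apply,
    ite_zero_mul_ite_zero, one_mul, sum_boole, card_dart_eq_ite_adj, adjMatrix_apply]
  split_ifs <;> simp

lemma dartSndMatrix_mul_transpose_dartSndMatrix :
    G.dartSndMatrix R * (G.dartSndMatrix R)ᵀ = G.degMatrix R := by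
  ext u v
  simp only [mul_apply, transpose_apply, dartSndMatrix, of_apply,
    ite_zero_mul_ite_zero, one_mul, sum_boole, degMatrix, diagonal_apply]
  split_ifs with h
  · subst h; simp [card_dart_snd_eq_degree]
  · rw [filter_false_of_mem (fun d _ ⟨h1, h2⟩ => h (h1 ▸ h2)), card_empty, Nat.cast_zero]

lemma dartFstMatrix_mul_dartSymmMatrix :
    G.dartFstMatrix R * G.dartSymmMatrix R = G.dartSndMatrix R := by
  ext u e
  simp [mul_apply, dartFstMatrix, dartSymmMatrix, dartSndMatrix]

lemma dartSndMatrix_mul_dartSymmMatrix :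
    G.dartSndMatrix R * G.dartSymmMatrix R = G.dartFstMatrix R := by
  ext u e
  simp [mul_apply, dartFstMatrix, dartSymmMatrix, dartSndMatrix]

lemma dartFstMatrix_mul_nonBacktrackingMatrix_add_dartSndMatrix :
    G.dartFstMatrix R * G.nonBacktrackingMatrix R + G.dartSndMatrix R =
      G.adjMatrix R * G.dartFstMatrix R := by
  rw [← dartFstMatrix_mul_transpose_dartSndMatrix, Matrix.mul_assoc,
    ← nonBacktrackingMatrix_add_dartSymmMatrix, Matrix.mul_add, dartFstMatrix_mul_dartSymmMatrix]

lemma dartSndMatrix_mul_nonBacktrackingMatrix_add_dartFstMatrix :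
    G.dartSndMatrix R * G.nonBacktrackingMatrix R + G.dartFstMatrix R =
      G.degMatrix R * G.dartFstMatrix R := by
  rw [← dartSndMatrix_mul_transpose_dartSndMatrix, Matrix.mul_assoc,
    ← nonBacktrackingMatrix_add_dartSymmMatrix, Matrix.mul_add, dartSndMatrix_mul_dartSymmMatrix]

variable (R) in
def nonBacktrackingWalkMatrix : ℕ → Matrix V V R
  | 0 => 1
  | ℓ + 1 => G.dartFstMatrix R * G.nonBacktrackingMatrix R ^ ℓ * (G.dartSndMatrix R)ᵀ

lemma nonBacktrackingWalkMatrix_one : G.nonBacktrackingWalkMatrix R 1 = G.adjMatrix R := by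
  simp [nonBacktrackingWalkMatrix, dartFstMatrix_mul_transpose_dartSndMatrix]

lemma map_nonBacktrackingWalkMatrix (ℓ : ℕ) :
    (G.nonBacktrackingWalkMatrix ℕ ℓ).map (Nat.castRingHom R) =
      G.nonBacktrackingWalkMatrix R ℓ := by
  have hS : (G.dartFstMatrix ℕ).map (Nat.castRingHom R) = G.dartFstMatrix R := by
    ext; simp only [map_apply, dartFstMatrix, of_apply]; split_ifs <;> simp
  have hT : (G.dartSndMatrix ℕ).map (Nat.castRingHom R) = G.dartSndMatrix R := by
    ext; simp only [map_apply, dartSndMatrix, of_apply]; split_ifs <;> simp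
  have hB : (G.nonBacktrackingMatrix ℕ).map (Nat.castRingHom R) = G.nonBacktrackingMatrix R := by
    ext; simp only [map_apply, nonBacktrackingMatrix, of_apply]; split_ifs <;> simp
  cases ℓ with
  | zero => exact (Nat.castRingHom R).mapMatrix.map_one
  | succ ℓ =>
    rw [nonBacktrackingWalkMatrix, nonBacktrackingWalkMatrix, Matrix.map_mul, Matrix.map_mul,
      transpose_map, ← RingHom.mapMatrix_apply, map_pow, RingHom.mapMatrix_apply, hS, hT, hB]

lemma trace_nonBacktrackingWalkMatrix_nonneg {R : Type*} [Semiring R] [PartialOrder R]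
    [IsOrderedRing R] (ℓ : ℕ) : 0 ≤ (G.nonBacktrackingWalkMatrix R ℓ).trace := by
  rw [← map_nonBacktrackingWalkMatrix, ← AddMonoidHom.map_trace]
  exact Nat.cast_nonneg _

variable {G} {r : ℕ}

lemma IsRegularOfDegree.degMatrix_eq (hreg : G.IsRegularOfDegree r) :
    G.degMatrix R = (r : R) • 1 := by
  ext u v
  simp [degMatrix, diagonal_apply, one_apply, hreg u]

section Ring

variable {R : Type*} [Ring R]

lemma IsRegularOfDegree.dartFstMatrix_mul_nonBacktrackingMatrix_pow_add_two
    (hreg : G.IsRegularOfDegree r) (k : ℕ) :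
    G.dartFstMatrix R * G.nonBacktrackingMatrix R ^ (k + 2) =
      G.adjMatrix R * (G.dartFstMatrix R * G.nonBacktrackingMatrix R ^ (k + 1)) -
        ((r : R) - 1) • (G.dartFstMatrix R * G.nonBacktrackingMatrix R ^ k) := by
  have hS := G.dartFstMatrix_mul_nonBacktrackingMatrix_add_dartSndMatrix (R := R)
  have hT := G.dartSndMatrix_mul_nonBacktrackingMatrix_add_dartFstMatrix (R := R)
  rw [hreg.degMatrix_eq, smul_mul, Matrix.one_mul] at hT
  rw [pow_succ' _ (k + 1), ← Matrix.mul_assoc, eq_sub_of_add_eq hS, Matrix.sub_mul,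
    pow_succ', ← Matrix.mul_assoc (G.dartSndMatrix R), eq_sub_of_add_eq hT, sub_smul, one_smul,
    Matrix.sub_mul, smul_mul, Matrix.mul_assoc]

lemma IsRegularOfDegree.nonBacktrackingWalkMatrix_two (hreg : G.IsRegularOfDegree r) :
    G.nonBacktrackingWalkMatrix R 2 = G.adjMatrix R ^ 2 - (r : R) • 1 := by
  have hS := G.dartFstMatrix_mul_nonBacktrackingMatrix_add_dartSndMatrix (R := R)
  rw [nonBacktrackingWalkMatrix, pow_one, eq_sub_of_add_eq hS, Matrix.sub_mul, Matrix.mul_assoc,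
    dartFstMatrix_mul_transpose_dartSndMatrix, dartSndMatrix_mul_transpose_dartSndMatrix,
    hreg.degMatrix_eq, sq]

lemma IsRegularOfDegree.nonBacktrackingWalkMatrix_add_three (hreg : G.IsRegularOfDegree r)
    (k : ℕ) :
    G.nonBacktrackingWalkMatrix R (k + 3) =
      G.adjMatrix R * G.nonBacktrackingWalkMatrix R (k + 2) -
        ((r : R) - 1) • G.nonBacktrackingWalkMatrix R (k + 1) := by
  simp only [nonBacktrackingWalkMatrix, hreg.dartFstMatrix_mul_nonBacktrackingMatrix_pow_add_two,
    Matrix.sub_mul, smul_mul, Matrix.mul_assoc]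

end Ring

lemma IsRegularOfDegree.aeval_Fpoly_adjMatrix (hreg : G.IsRegularOfDegree r) :
    ∀ ℓ, aeval (G.adjMatrix ℝ) (Fpoly r ℓ) = G.nonBacktrackingWalkMatrix ℝ ℓ
  | 0 => by simp [Fpoly, nonBacktrackingWalkMatrix]
  | 1 => by simp [Fpoly, nonBacktrackingWalkMatrix_one]
  | 2 => by
    rw [Fpoly, map_sub, map_pow, aeval_X, aeval_C, Algebra.algebraMap_eq_smul_one,
      hreg.nonBacktrackingWalkMatrix_two]
  | k + 3 => by
    rw [Fpoly, hreg.nonBacktrackingWalkMatrix_add_three, map_sub, map_mul, map_mul, aeval_X,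
      aeval_C, hreg.aeval_Fpoly_adjMatrix (k + 2), hreg.aeval_Fpoly_adjMatrix (k + 1),
      Algebra.algebraMap_eq_smul_one, smul_mul, Matrix.one_mul]

lemma IsRegularOfDegree.card_mul_le_trace_aeval (hreg : G.IsRegularOfDegree r) (t : ℕ)
    (f : ℕ → ℝ) (hf : ∀ i, 1 ≤ i → i ≤ t → 0 ≤ f i) :
    Fintype.card V * f 0 ≤
      (aeval (G.adjMatrix ℝ) (∑ i ∈ range (t + 1), C (f i) * Fpoly r i)).trace := by
  simp only [map_sum, map_mul, aeval_C, hreg.aeval_Fpoly_adjMatrix, trace_sum,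
    Algebra.algebraMap_eq_smul_one, smul_mul, Matrix.one_mul, trace_smul, smul_eq_mul]
  rw [sum_range_succ', nonBacktrackingWalkMatrix, trace_one, mul_comm]
  refine le_add_of_nonneg_left (sum_nonneg fun i hi => mul_nonneg ?_ ?_)
  · exact hf (i + 1) (Nat.le_add_left 1 i) (Nat.succ_le_of_lt (mem_range.1 hi))
  · exact trace_nonBacktrackingWalkMatrix_nonneg G (i + 1)

lemma IsRegularOfDegree.adjMatrix_mulVec_eq_smul_iff (hreg : G.IsRegularOfDegree r)
    {x : V → ℝ} : G.adjMatrix ℝ *ᵥ x = (r : ℝ) • x ↔ G.lapMatrix ℝ *ᵥ x = 0 := by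
  rw [lapMatrix, sub_mulVec, hreg.degMatrix_eq, smul_mulVec, one_mulVec, sub_eq_zero, eq_comm]

lemma Connected.apply_eq_of_adjMatrix_mulVec_eq_smul (hconn : G.Connected)
    (hreg : G.IsRegularOfDegree r) {x : V → ℝ} (hx : G.adjMatrix ℝ *ᵥ x = (r : ℝ) • x)
    (u v : V) : x u = x v :=
  (lapMatrix_mulVec_eq_zero_iff_forall_reachable G).1 (hreg.adjMatrix_mulVec_eq_smul_iff.1 hx)
    u v (hconn u v)

lemma Connected.card_eigenvalues_adjMatrix_eq_degree_le_one (hconn : G.Connected)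
    (hreg : G.IsRegularOfDegree r) :
    #{i | (G.isHermitian_adjMatrix ℝ).eigenvalues i = r} ≤ 1 := by
  set hA := G.isHermitian_adjMatrix ℝ
  have hconst : ∀ i, hA.eigenvalues i = r → ∀ a b,
      hA.eigenvectorBasis i a = hA.eigenvectorBasis i b := fun i hi =>
    hconn.apply_eq_of_adjMatrix_mulVec_eq_smul hreg (hi ▸ hA.mulVec_eigenvectorBasis i)
  exact card_le_one.2 fun i hi j hj => hA.eigenvectorBasis.orthonormal.eq_of_forall_apply_eq
    (hconst i (mem_filter.1 hi).2) (hconst j (mem_filter.1 hj).2)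

end SimpleGraph

theorem nozaki_LP_bound_general (r : ℕ) {V : Type*} [Fintype V] [DecidableEq V]
    (G : SimpleGraph V) [DecidableRel G.Adj]
    (hconn : G.Connected) (hreg : G.IsRegularOfDegree r)
    (d : ℕ) (θ : Fin d → ℝ)
    (hθ0 : 0 < d) (hθr : θ ⟨0, hθ0⟩ = r)
    (hspec : ∀ lam : ℝ,
      (∃ x : V → ℝ, x ≠ 0 ∧ (G.adjMatrix ℝ).mulVec x = lam • x) ↔ ∃ i, θ i = lam)
    (t : ℕ) (f : ℕ → ℝ)
    (p : Polynomial ℝ) (hp : p = ∑ i ∈ Finset.range (t + 1), C (f i) * Fpoly r i)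
    (hpr : 0 < p.eval (r : ℝ))
    (hpθ : ∀ i : Fin d, 0 < (i : ℕ) → p.eval (θ i) ≤ 0)
    (hf0 : 0 < f 0) (hfi : ∀ i, 1 ≤ i → i ≤ t → 0 ≤ f i) :
    (Fintype.card V : ℝ) ≤ p.eval (r : ℝ) / f 0 := by
  set hA := G.isHermitian_adjMatrix ℝ
  have hnonpos : ∀ i, hA.eigenvalues i ≠ r → p.eval (hA.eigenvalues i) ≤ 0 := by
    intro i hi
    obtain ⟨j, hj⟩ := (hspec _).1 ⟨hA.eigenvectorBasis i,
      by simpa using hA.eigenvectorBasis.orthonormal.ne_zero i, hA.mulVec_eigenvectorBasis i⟩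
    have hj0 : j ≠ ⟨0, hθ0⟩ := by rintro rfl; exact hi (hj ▸ hθr)
    exact hj ▸ hpθ j (Nat.pos_of_ne_zero fun h => hj0 (Fin.ext h))
  have hupper : (aeval (G.adjMatrix ℝ) p).trace ≤ p.eval (r : ℝ) := by
    rw [hA.trace_aeval]
    simp only [RCLike.ofReal_real_eq_id, id]
    exact Fintype.sum_comp_le_of_card_fiber_le_one hA.eigenvalues p.eval _
      (hconn.card_eigenvalues_adjMatrix_eq_degree_le_one hreg) hpr.le hnonpos
  rw [le_div_iff₀ hf0]
  exact (hp ▸ hreg.card_mul_le_trace_aeval t f hfi).trans hupper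

/-- Nozaki's linear programming bound for regular graphs. -/
theorem nozaki_LP_bound (r : ℕ) {V : Type*} [Fintype V] [DecidableEq V]
    (G : SimpleGraph V) [DecidableRel G.Adj]
    (hconn : G.Connected) (hreg : G.IsRegularOfDegree r)
    (d : ℕ) (θ : Fin d → ℝ)
    (hθ0 : 0 < d) (hθr : θ ⟨0, hθ0⟩ = r)
    (hθanti : ∀ i j : Fin d, i < j → θ j < θ i)
    (hspec : ∀ lam : ℝ,
      (∃ x : V → ℝ, x ≠ 0 ∧ (G.adjMatrix ℝ).mulVec x = lam • x) ↔ ∃ i, θ i = lam)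
    (t : ℕ) (f : ℕ → ℝ)
    (p : Polynomial ℝ) (hp : p = ∑ i ∈ Finset.range (t + 1), C (f i) * Fpoly r i)
    (hpr : 0 < p.eval (r : ℝ))
    (hpθ : ∀ i : Fin d, 0 < (i : ℕ) → p.eval (θ i) ≤ 0)
    (hf0 : 0 < f 0) (hfi : ∀ i, 1 ≤ i → i ≤ t → 0 ≤ f i) :
    (Fintype.card V : ℝ) ≤ p.eval (r : ℝ) / f 0 :=
  nozaki_LP_bound_general r G hconn hreg d θ hθ0 hθr hspec t f p hp hpr hpθ hf0 hfi
end

section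
/- Let r ≥ 3, t ≥ 3 be integers and c > 0, and let T(r,t,c) be the t×t tridiagonal matrix with zero diagonal except the last diagonal entry r−c, superdiagonal (r, r−1, ..., r−1), and subdiagonal (1, ..., 1, c). Then the characteristic polynomial of T(r,t,c) is (up to sign) (x − r)(G_{t−1}(x) + (c−1)G_{t−2}(x)). -/
/-!
The characteristic matrix `X - T(r,t,c)` is tridiagonal, so its determinant satisfies the
continuant recurrence obtained by expanding along the last row. The perturbation by `c` sits in
the last row only, so the leading principal minor of size `k < t` is `F_k`, and the last step of
the recurrence gives `(X - r + c) F_{t-1} - c (r - 1) F_{t-2}`. Telescoping the recurrence of the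
`F_j` gives `(X - r) G_{j+1} = F_{j+2} - (r - 1) F_{j+1}`, which turns this into the claimed
factorisation.
-/

open Polynomial

/-- `G_j = ∑_{i=0}^j F_i`. -/
noncomputable def Gpoly (r : ℝ) (j : ℕ) : Polynomial ℝ :=
  ∑ i ∈ Finset.range (j + 1), Fpoly r i

/-- The tridiagonal matrix `T(r,t,c)`: zero diagonal except last entry `r - c`,
superdiagonal `(r, r-1, …, r-1)` and subdiagonal `(1, …, 1, c)`. -/
def Tmat (r c : ℝ) (t : ℕ) : Matrix (Fin t) (Fin t) ℝ :=
  Matrix.of fun i j =>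
    if (j : ℕ) = (i : ℕ) + 1 then (if (i : ℕ) = 0 then r else r - 1)
    else if (i : ℕ) = (j : ℕ) + 1 then (if (i : ℕ) = t - 1 then c else 1)
    else if i = j ∧ (i : ℕ) = t - 1 then r - c
    else 0

namespace Matrix

variable {R : Type*} [CommRing R]

def tridiagonal (d a b : ℕ → R) (n : ℕ) : Matrix (Fin n) (Fin n) R :=
  of fun i j =>
    if (i : ℕ) = j then d i
    else if (j : ℕ) = i + 1 then a i
    else if (i : ℕ) = j + 1 then b j
    else 0

variable (d a b : ℕ → R)

theorem tridiagonal_apply {n : ℕ} (i j : Fin n) :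
    tridiagonal d a b n i j =
      if (i : ℕ) = j then d i
      else if (j : ℕ) = i + 1 then a i
      else if (i : ℕ) = j + 1 then b j
      else 0 :=
  rfl

variable {d a b} in
theorem tridiagonal_apply_of_succ_lt {n : ℕ} {i j : Fin n}
    (h : (i : ℕ) + 1 < j ∨ (j : ℕ) + 1 < i) :
    tridiagonal d a b n i j = 0 := by
  rw [tridiagonal_apply]
  split_ifs <;> first | rfl | omega

@[simp]
theorem tridiagonal_submatrix_castSucc (n : ℕ) :
    (tridiagonal d a b (n + 1)).submatrix Fin.castSucc Fin.castSucc = tridiagonal d a b n := by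
  ext i j
  simp [tridiagonal_apply]

theorem det_tridiagonal_succ_succ (n : ℕ) :
    (tridiagonal d a b (n + 2)).det =
      d (n + 1) * (tridiagonal d a b (n + 1)).det - a n * b n * (tridiagonal d a b n).det := by
  set M := tridiagonal d a b (n + 2)
  have hcorner : (M.submatrix (Fin.last _).succAbove (Fin.last n).castSucc.succAbove).det =
      a n * (tridiagonal d a b n).det := by
    rw [det_succ_column _ (Fin.last _), Fin.sum_univ_castSucc, Finset.sum_eq_zero, zero_add]
    · have : (M.submatrix (Fin.last _).succAbove (Fin.last n).castSucc.succAbove).submatrix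
          (Fin.last n).succAbove (Fin.last n).succAbove = tridiagonal d a b n := by
        ext i j
        simp [M, tridiagonal_apply, Fin.succAbove, Fin.lt_def]
      rw [this]
      simp [M, tridiagonal_apply]
    · intro i _
      simp only [submatrix_apply, Fin.succAbove_last]
      exact mul_eq_zero_of_left (mul_eq_zero_of_right _ (tridiagonal_apply_of_succ_lt
        (by left; simp [Fin.succAbove]))) _
  rw [det_succ_row M (Fin.last _), Fin.sum_univ_castSucc, Fin.sum_univ_castSucc,
    Finset.sum_eq_zero, hcorner, Fin.succAbove_last, tridiagonal_submatrix_castSucc]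
  · simp [M, tridiagonal_apply, show n ≠ n + 1 + 1 by omega]
    ring
  · intro i _
    exact mul_eq_zero_of_left (mul_eq_zero_of_right _ (tridiagonal_apply_of_succ_lt
        (by right; simp))) _

theorem charmatrix_tridiagonal (n : ℕ) :
    charmatrix (tridiagonal d a b n) =
      tridiagonal (fun i => X - C (d i)) (fun i => -C (a i)) (fun i => -C (b i)) n := by
  ext i j
  by_cases hij : i = j
  · subst hij
    simp [tridiagonal_apply]
  · have : (i : ℕ) ≠ j := Fin.val_ne_of_ne hij
    simp only [charmatrix_apply_ne _ _ _ hij, tridiagonal_apply, if_neg this]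
    split_ifs <;> simp

end Matrix

open Matrix

theorem Tmat_eq_tridiagonal (r c : ℝ) (t : ℕ) :
    Tmat r c t =
      tridiagonal (fun i => if i = t - 1 then r - c else 0) (fun i => if i = 0 then r else r - 1)
        (fun i => if i + 1 = t - 1 then c else 1) t := by
  ext i j
  simp only [Tmat, of_apply, tridiagonal_apply, Fin.ext_iff]
  split_ifs <;> first | rfl | omega

theorem det_tridiagonal_eq_Fpoly (r : ℝ) {d a b : ℕ → ℝ[X]} : ∀ k, (∀ i < k, d i = X) →
    a 0 * b 0 = C r → (∀ i, 0 < i → i + 1 < k → a i * b i = C (r - 1)) →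
    (tridiagonal d a b k).det = Fpoly r k
  | 0, _, _, _ => by simp [Fpoly]
  | 1, hd, _, _ => by simp [tridiagonal_apply, hd 0 one_pos, Fpoly]
  | 2, hd, h0, _ => by
    rw [det_tridiagonal_succ_succ, det_tridiagonal_eq_Fpoly r 1 (fun i hi => hd i (by omega)) h0
      (by omega), hd 1 (by omega), h0]
    simp [Fpoly, sq]
  | k + 3, hd, h0, hab => by
    rw [det_tridiagonal_succ_succ, hd (k + 2) (by omega), hab (k + 1) (by omega) (by omega),
      det_tridiagonal_eq_Fpoly r (k + 2) (fun i hi => hd i (by omega)) h0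
        (fun i hi hik => hab i hi (by omega)),
      det_tridiagonal_eq_Fpoly r (k + 1) (fun i hi => hd i (by omega)) h0
        (fun i hi hik => hab i hi (by omega))]
    rfl

theorem X_sub_C_mul_Gpoly_succ (r : ℝ) (j : ℕ) :
    (X - C r) * Gpoly r (j + 1) = Fpoly r (j + 2) - C (r - 1) * Fpoly r (j + 1) := by
  induction j with
  | zero =>
    simp only [Gpoly, Finset.sum_range_succ, Finset.sum_range_zero, Fpoly, map_sub, map_one]
    ring
  | succ j ih =>
    rw [Gpoly, Finset.sum_range_succ, ← Gpoly, mul_add, ih]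
    simp only [Fpoly, map_sub, map_one]
    ring

theorem charpoly_Tmat_general (r c : ℝ) (t : ℕ) (ht : 3 ≤ t) :
    (Tmat r c t).charpoly =
      (X - C r) * (Gpoly r (t - 1) + C (c - 1) * Gpoly r (t - 2)) := by
  obtain ⟨n, rfl⟩ : ∃ n, t = n + 3 := ⟨t - 3, by omega⟩
  rw [charpoly, Tmat_eq_tridiagonal, charmatrix_tridiagonal, det_tridiagonal_succ_succ]
  have hminor : ∀ k ≤ n + 2, (tridiagonal (fun i => X - C (if i = n + 3 - 1 then r - c else 0))
      (fun i => -C (if i = 0 then r else r - 1))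
      (fun i => -C (if i + 1 = n + 3 - 1 then c else 1)) k).det = Fpoly r k := fun k hk =>
    det_tridiagonal_eq_Fpoly r k (fun i hi => by simp [show i ≠ n + 2 by omega]) (by simp)
      (fun i hi hik => by simp [hi.ne', show i ≠ n + 1 by omega])
  rw [hminor _ le_rfl, hminor _ (by omega)]
  have hG₂ : (X - C r) * Gpoly r (n + 2) = Fpoly r (n + 3) - C (r - 1) * Fpoly r (n + 2) :=
    X_sub_C_mul_Gpoly_succ r (n + 1)
  have hG₁ := X_sub_C_mul_Gpoly_succ r n
  have hF : Fpoly r (n + 3) = X * Fpoly r (n + 2) - C (r - 1) * Fpoly r (n + 1) := rfl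
  simp only [show n + 3 - 1 = n + 2 from rfl, show n + 3 - 2 = n + 1 from rfl, if_true,
    Nat.add_one_ne_zero, if_false, map_sub, map_one] at hG₁ hG₂ hF ⊢
  linear_combination -hG₂ - (C c - 1) * hG₁ - hF

theorem charpoly_Tmat (r c : ℝ) (hr : 3 ≤ r) (hc : 0 < c) (t : ℕ) (ht : 3 ≤ t) :
    (Tmat r c t).charpoly =
      (X - C r) * (Gpoly r (t - 1) + C (c - 1) * Gpoly r (t - 2)) :=
  charpoly_Tmat_general r c t ht
end

section
/- Let r ≥ 3, t ≥ 3, c ≤ r, and let B(r,t,c) be the t×t tridiagonal matrix with lower diagonal (1,...,1,c,r), upper diagonal (r, r−1,...,r−1, r−c), and constant row sum r. Then the characteristic polynomial of B(r,t,c) equals (up to sign) (x² − r²)(H_{t−2}(x) + (c−1)H_{t−4}(x)). -/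
/-!
Expanding `det (X - B)` along its last row gives the three-term recurrence
`Dₙ₊₂ = X Dₙ₊₁ - aₙ bₙ Dₙ` for the leading principal minors of a tridiagonal matrix. For `B(r,t,c)`
the products `aₙ bₙ` are `r, r - 1, r - 1, …` up to the last two rows, so the minors of size
`n ≤ t - 2` are exactly the `Fₙ`. The last two rows contribute the products `(r - 1) c` and
`(r - c) r`, and the identity `(X² - r²) Hⱼ = r Fⱼ₊₂ - (r - 1) X Fⱼ₊₁`, together with
`Hⱼ₊₂ = Fⱼ₊₂ + Hⱼ`, rewrites the result as `(X² - r²) (Hₜ₋₂ + (c - 1) Hₜ₋₄)`.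
-/

open Polynomial

/-- `H_j = ∑_{i=0}^{⌊j/2⌋} F_{j-2i}`. -/
noncomputable def Hpoly (r : ℝ) (j : ℕ) : Polynomial ℝ :=
  ∑ i ∈ Finset.range (j / 2 + 1), Fpoly r (j - 2 * i)

/-- `H_j` extended to negative indices `j = -1, -2` by the convention that the recurrence
`H_j = x H_{j-1} - (r-1) H_{j-2}` continues to hold, giving `H_{-1} = 0` and
`H_{-2} = -1/(r-1)`. -/
noncomputable def Hext (r : ℝ) (n : ℤ) : Polynomial ℝ :=
  if n = -1 then 0 else if n = -2 then C (-(1 / (r - 1))) else Hpoly r n.toNat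

/-- The tridiagonal matrix `B(r,t,c)` with lower diagonal `(1,…,1,c,r)`,
upper diagonal `(r, r-1,…,r-1, r-c)` and zero diagonal (constant row sum `r`). -/
def Bmat (r c : ℝ) (t : ℕ) : Matrix (Fin t) (Fin t) ℝ :=
  Matrix.of fun i j =>
    if (j : ℕ) = (i : ℕ) + 1 then
      (if (i : ℕ) = 0 then r else if (i : ℕ) = t - 2 then r - c else r - 1)
    else if (i : ℕ) = (j : ℕ) + 1 then
      (if (j : ℕ) = t - 2 then r else if (j : ℕ) = t - 3 then c else 1)
    else 0

namespace Matrix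
variable {R : Type*} [CommRing R]

variable (d a b : ℕ → R)

theorem det_tridiagonal_submatrix_castSucc_succAbove (n : ℕ) :
    ((tridiagonal d a b (n + 2)).submatrix Fin.castSucc (Fin.last n).castSucc.succAbove).det =
      a n * (tridiagonal d a b n).det := by
  rw [det_succ_column _ (Fin.last _), Fin.sum_univ_castSucc]
  have hzero (i : Fin n) : tridiagonal d a b (n + 2) i.castSucc.castSucc (Fin.last (n + 1)) = 0 := by
    simp only [tridiagonal, of_apply, Fin.val_castSucc, Fin.val_last]
    rw [if_neg (by omega), if_neg (by omega), if_neg (by omega)]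
  have hcorner : tridiagonal d a b (n + 2) (Fin.last n).castSucc (Fin.last (n + 1)) = a n := by
    simp [tridiagonal]
  have hminor : ((tridiagonal d a b (n + 2)).submatrix Fin.castSucc
      (Fin.last n).castSucc.succAbove).submatrix Fin.castSucc Fin.castSucc =
        tridiagonal d a b n := by
    ext i j
    simp [tridiagonal, Fin.succAbove_castSucc_of_lt, Fin.castSucc_lt_last]
  simp only [submatrix_apply, Fin.succAbove_castSucc_self, Fin.succ_last, hzero, mul_zero,
    zero_mul, Finset.sum_const_zero, zero_add, Fin.succAbove_last, hminor, hcorner, Fin.val_last,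
    ← two_mul, pow_mul, neg_one_sq, one_pow, one_mul]

theorem charpoly_tridiagonal_zero : (tridiagonal d a b 0).charpoly = 1 :=
  charpoly_isEmpty

theorem charpoly_tridiagonal_one : (tridiagonal d a b 1).charpoly = X - C (d 0) := by
  simp [charpoly, tridiagonal]

theorem charpoly_tridiagonal_succ_succ (n : ℕ) :
    (tridiagonal d a b (n + 2)).charpoly =
      (X - C (d (n + 1))) * (tridiagonal d a b (n + 1)).charpoly -
        C (a n * b n) * (tridiagonal d a b n).charpoly := by
  simp only [charpoly, charmatrix_tridiagonal, det_tridiagonal_succ_succ, map_mul]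
  ring

end Matrix

open Matrix

theorem Hpoly_add_two (r : ℝ) (j : ℕ) : Hpoly r (j + 2) = Fpoly r (j + 2) + Hpoly r j := by
  rw [Hpoly, Hpoly, show (j + 2) / 2 + 1 = j / 2 + 1 + 1 by omega, Finset.sum_range_succ',
    add_comm]
  congr 1
  refine Finset.sum_congr rfl fun i _ => ?_
  congr 1
  omega

theorem Hpoly_zero (r : ℝ) : Hpoly r 0 = 1 := by
  simp [Hpoly, Fpoly]

theorem Hpoly_one (r : ℝ) : Hpoly r 1 = X := by
  simp [Hpoly, Fpoly]

theorem X_sq_sub_C_sq_mul_Hpoly (r : ℝ) :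
    ∀ j, (X ^ 2 - C (r ^ 2)) * Hpoly r j = C r * Fpoly r (j + 2) - C (r - 1) * X * Fpoly r (j + 1)
  | 0 => by
    simp only [Hpoly_zero, Fpoly, map_sub, map_pow, map_one]
    ring
  | 1 => by
    simp only [Hpoly_one, Fpoly, map_sub, map_pow, map_one]
    ring
  | j + 2 => by
    rw [Hpoly_add_two, mul_add, X_sq_sub_C_sq_mul_Hpoly r j]
    simp only [Fpoly, map_sub, map_pow, map_one]
    ring

theorem Hext_natCast (r : ℝ) (k : ℕ) : Hext r k = Hpoly r k := by
  simp [Hext]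

theorem Hext_neg_one (r : ℝ) : Hext r (-1) = 0 := by
  simp [Hext]

def Bmat.upper (r c : ℝ) (t i : ℕ) : ℝ :=
  if i = 0 then r else if i = t - 2 then r - c else r - 1

def Bmat.lower (r c : ℝ) (t j : ℕ) : ℝ :=
  if j = t - 2 then r else if j = t - 3 then c else 1

theorem Bmat_eq_tridiagonal (r c : ℝ) (t : ℕ) :
    Bmat r c t = tridiagonal 0 (Bmat.upper r c t) (Bmat.lower r c t) t := by
  ext i j
  simp only [Bmat, tridiagonal, of_apply, Bmat.upper, Bmat.lower, Pi.zero_apply]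
  split_ifs <;> first | rfl | omega

theorem charpoly_tridiagonal_Bmat_eq_Fpoly (r c : ℝ) {t : ℕ} :
    ∀ n, n + 2 ≤ t → (tridiagonal 0 (Bmat.upper r c t) (Bmat.lower r c t) n).charpoly = Fpoly r n
  | 0, _ => charpoly_tridiagonal_zero ..
  | 1, _ => by simp [charpoly_tridiagonal_one, Fpoly]
  | 2, h => by
    rw [charpoly_tridiagonal_succ_succ, charpoly_tridiagonal_Bmat_eq_Fpoly r c 1 (by omega),
      charpoly_tridiagonal_Bmat_eq_Fpoly r c 0 (by omega)]
    have hprod : Bmat.upper r c t 0 * Bmat.lower r c t 0 = r := by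
      simp [Bmat.upper, Bmat.lower, show 0 ≠ t - 2 by omega, show 0 ≠ t - 3 by omega]
    simp only [hprod, Fpoly, Pi.zero_apply, map_zero, sub_zero]
    ring
  | k + 3, h => by
    rw [charpoly_tridiagonal_succ_succ, charpoly_tridiagonal_Bmat_eq_Fpoly r c (k + 2) (by omega),
      charpoly_tridiagonal_Bmat_eq_Fpoly r c (k + 1) (by omega)]
    have hprod : Bmat.upper r c t (k + 1) * Bmat.lower r c t (k + 1) = r - 1 := by
      simp [Bmat.upper, Bmat.lower, show k + 1 ≠ t - 2 by omega, show k + 1 ≠ t - 3 by omega]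
    simp [hprod, Fpoly]

theorem charpoly_Bmat_add_three (r c : ℝ) (m : ℕ) :
    (Bmat r c (m + 3)).charpoly =
      X * (X * Fpoly r (m + 1) - C (Bmat.upper r c (m + 3) m * c) * Fpoly r m) -
        C ((r - c) * r) * Fpoly r (m + 1) := by
  rw [Bmat_eq_tridiagonal, charpoly_tridiagonal_succ_succ, charpoly_tridiagonal_succ_succ,
    charpoly_tridiagonal_Bmat_eq_Fpoly r c (m + 1) (by omega),
    charpoly_tridiagonal_Bmat_eq_Fpoly r c m (by omega)]
  simp [Bmat.upper, Bmat.lower]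

theorem charpoly_Bmat_general (r c : ℝ) (t : ℕ) (ht : 3 ≤ t) :
    (Bmat r c t).charpoly =
      (X ^ 2 - C (r ^ 2)) * (Hext r ((t : ℤ) - 2) + C (c - 1) * Hext r ((t : ℤ) - 4)) := by
  obtain ⟨m, rfl⟩ := Nat.exists_eq_add_of_le' ht
  rw [charpoly_Bmat_add_three]
  -- for `t = 3` the entry `B₀₁` is `r`, not `r - 1`, and `Hₜ₋₄ = H₋₁ = 0`
  rcases m with _ | k
  · rw [show ((0 + 3 : ℕ) : ℤ) - 2 = (1 : ℕ) by norm_num,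
      show ((0 + 3 : ℕ) : ℤ) - 4 = -1 by norm_num, Hext_natCast, Hext_neg_one]
    have hupper : Bmat.upper r c 3 0 = r := if_pos rfl
    simp only [hupper, Fpoly, Hpoly_one, map_sub, map_mul, map_pow, mul_zero, add_zero]
    ring
  · rw [show ((k + 1 + 3 : ℕ) : ℤ) - 2 = (k + 2 : ℕ) by push_cast; ring,
      show ((k + 1 + 3 : ℕ) : ℤ) - 4 = k by push_cast; ring, Hext_natCast, Hext_natCast,
      Hpoly_add_two]
    have hupper : Bmat.upper r c (k + 1 + 3) (k + 1) = r - 1 := by simp [Bmat.upper]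
    have hH := X_sq_sub_C_sq_mul_Hpoly r k
    simp only [hupper, map_sub, map_mul, map_pow, map_one] at hH ⊢
    linear_combination (-(C c) : ℝ[X]) * hH

theorem charpoly_Bmat (r c : ℝ) (hr : 3 ≤ r) (hc : 0 < c) (hcr : c ≤ r)
    (t : ℕ) (ht : 3 ≤ t) :
    (Bmat r c t).charpoly =
      (X ^ 2 - C (r ^ 2)) * (Hext r ((t : ℤ) - 2) + C (c - 1) * Hext r ((t : ℤ) - 4)) :=
  charpoly_Bmat_general r c t ht
end

section
/- Let r ≥ 3 and for t ≥ 2 let λ^{(t)} denote the largest root of G_t and μ^{(t)} the largest root of F_t. Then λ^{(t)} < μ^{(t)} for every t ≥ 1. -/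
open Polynomial

lemma Fpoly_pos_aux (r : ℝ) (hr : 3 ≤ r) (x : ℝ) (hx : 2 * Real.sqrt (r - 1) ≤ x) :
    ∀ j, 0 < (Fpoly r j).eval x ∧ (x / 2) * (Fpoly r j).eval x ≤ (Fpoly r (j + 1)).eval x := by
  have h1 : (0:ℝ) ≤ r - 1 := by linarith
  have hs : Real.sqrt (r - 1) ^ 2 = r - 1 := Real.sq_sqrt h1
  have hsn : 0 ≤ Real.sqrt (r - 1) := Real.sqrt_nonneg _
  have hxpos : 0 < x := by nlinarith [Real.sqrt_pos.mpr (show (0:ℝ) < r - 1 by linarith)]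
  have hx2 : 4 * (r - 1) ≤ x ^ 2 := by nlinarith
  intro j
  induction j with
  | zero =>
    constructor
    · simp [Fpoly]
    · simp [Fpoly]; linarith
  | succ k ih =>
    obtain ⟨ihp, ihle⟩ := ih
    have hk1 : 0 < (Fpoly r (k + 1)).eval x :=
      lt_of_lt_of_le (mul_pos (half_pos hxpos) ihp) ihle
    refine ⟨hk1, ?_⟩
    match k with
    | 0 =>
      simp only [Fpoly, eval_one, eval_X, eval_sub, eval_pow, eval_C] at *
      nlinarith
    | Nat.succ k' =>
      have hrec : (Fpoly r (k' + 3)).eval x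
          = x * (Fpoly r (k' + 2)).eval x - (r - 1) * (Fpoly r (k' + 1)).eval x := by
        simp [Fpoly]
      rw [hrec]
      nlinarith [mul_le_mul_of_nonneg_left ihle (le_of_lt (half_pos hxpos)), ihp]

lemma Fpoly_root_lt (r : ℝ) (hr : 3 ≤ r) {j : ℕ} {x : ℝ}
    (hx : (Fpoly r j).eval x = 0) : x < 2 * Real.sqrt (r - 1) := by
  by_contra h
  push_neg at h
  exact absurd hx (ne_of_gt ((Fpoly_pos_aux r hr x h j).1))

lemma exists_greatest_root (r : ℝ) (hr : 3 ≤ r) (n : ℕ) (a : ℝ)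
    (ha : (Fpoly r n).eval a < 0) :
    ∃ m, IsGreatest {x : ℝ | (Fpoly r n).eval x = 0} m ∧ a < m ∧
      ∀ x, m < x → 0 < (Fpoly r n).eval x := by
  set B := 2 * Real.sqrt (r - 1) with hB'
  have hcont : Continuous fun x : ℝ => (Fpoly r n).eval x := (Fpoly r n).continuous
  have haB : a < B := by
    by_contra h
    push_neg at h
    exact absurd ha (not_lt.mpr (le_of_lt (Fpoly_pos_aux r hr a h n).1))
  have hBpos : 0 < (Fpoly r n).eval B := (Fpoly_pos_aux r hr B le_rfl n).1
  obtain ⟨z, hz, hz0⟩ :=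
    intermediate_value_Ioo (le_of_lt haB) hcont.continuousOn
      (Set.mem_Ioo.mpr ⟨ha, hBpos⟩)
  set S := {x : ℝ | (Fpoly r n).eval x = 0} with hS'
  have hSne : S.Nonempty := ⟨z, hz0⟩
  have hSc : IsClosed S := isClosed_eq hcont continuous_const
  have hSb : BddAbove S := ⟨B, fun y hy => le_of_lt (Fpoly_root_lt r hr hy)⟩
  have hmem : sSup S ∈ S := hSc.csSup_mem hSne hSb
  refine ⟨sSup S, ⟨hmem, fun y hy => le_csSup hSb hy⟩,
    lt_of_lt_of_le hz.1 (le_csSup hSb hz0), ?_⟩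
  intro x hx
  by_contra hnp
  push_neg at hnp
  rcases lt_or_eq_of_le hnp with hlt0 | heq
  · have hxB : x < B := by
      by_contra h
      push_neg at h
      exact absurd hlt0 (not_lt.mpr (le_of_lt (Fpoly_pos_aux r hr x h n).1))
    obtain ⟨w, hw, hw0⟩ :=
      intermediate_value_Ioo (le_of_lt hxB) hcont.continuousOn
        (Set.mem_Ioo.mpr ⟨hlt0, hBpos⟩)
    have hws : w ≤ sSup S := le_csSup hSb hw0
    linarith [hw.1]
  · exact absurd (le_csSup hSb (show x ∈ S from heq)) (not_le.mpr hx)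

lemma Fpoly_key (r : ℝ) (hr : 3 ≤ r) : ∀ t : ℕ, 1 ≤ t →
    ∃ m : ℝ, IsGreatest {x : ℝ | (Fpoly r t).eval x = 0} m ∧ 0 ≤ m ∧
      (∀ i < t, ∀ x : ℝ, m ≤ x → 0 < (Fpoly r i).eval x) ∧
      (∀ x : ℝ, m < x → 0 < (Fpoly r t).eval x) := by
  intro t ht
  induction t, ht using Nat.le_induction with
  | base =>
    refine ⟨0, ⟨?_, ?_⟩, le_rfl, ?_, ?_⟩
    · simp [Fpoly]
    · intro y hy
      simp only [Fpoly, Set.mem_setOf_eq, eval_X] at hy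
      exact le_of_eq hy
    · intro i hi x hx
      interval_cases i
      simp [Fpoly]
    · intro x hx
      simpa [Fpoly] using hx
  | succ t ht ih =>
    rcases eq_or_lt_of_le ht with h1 | h2
    · -- t = 1, prove the claim for 2 directly with m = √r
      have ht2 : t = 1 := h1.symm
      subst ht2
      have hr0 : (0:ℝ) ≤ r := by linarith
      have hsq : Real.sqrt r ^ 2 = r := Real.sq_sqrt hr0
      have hsp : 0 < Real.sqrt r := Real.sqrt_pos.mpr (by linarith)
      refine ⟨Real.sqrt r, ⟨?_, ?_⟩, le_of_lt hsp, ?_, ?_⟩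
      · show (Fpoly r 2).eval (Real.sqrt r) = 0
        simp only [Fpoly, eval_sub, eval_pow, eval_X, eval_C]
        linarith
      · intro y hy
        simp only [Fpoly, Set.mem_setOf_eq, eval_sub, eval_pow, eval_X, eval_C] at hy
        by_contra h
        push_neg at h
        nlinarith
      · intro i hi x hx
        interval_cases i
        · simp [Fpoly]
        · simp only [Fpoly, eval_X]; linarith
      · intro x hx
        simp only [Fpoly, eval_sub, eval_pow, eval_X, eval_C]
        nlinarith
    · -- t ≥ 2
      obtain ⟨s, rfl⟩ : ∃ s, t = s + 2 := ⟨t - 2, by omega⟩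
      obtain ⟨m, hmg, hm0, hlt, hgt⟩ := ih
      have hm00 : (Fpoly r (s + 2)).eval m = 0 := hmg.1
      have hFm : 0 < (Fpoly r (s + 1)).eval m := hlt (s + 1) (by omega) m le_rfl
      have hneg : (Fpoly r (s + 3)).eval m < 0 := by
        have hrec : (Fpoly r (s + 3)).eval m
            = m * (Fpoly r (s + 2)).eval m - (r - 1) * (Fpoly r (s + 1)).eval m := by
          simp [Fpoly]
        rw [hrec, hm00]
        nlinarith
      obtain ⟨m', hmg', hmm', hgt'⟩ := exists_greatest_root r hr (s + 3) m hneg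
      refine ⟨m', hmg', by linarith, ?_, hgt'⟩
      intro i hi x hx
      rcases Nat.lt_or_ge i (s + 2) with h | h
      · exact hlt i h x (by linarith)
      · have hieq : i = s + 2 := by omega
        subst hieq
        exact hgt x (by linarith)

theorem largest_root_G_lt_largest_root_F (r : ℝ) (hr : 3 ≤ r) (t : ℕ) (ht : 1 ≤ t)
    (lam mu : ℝ)
    (hlam : IsGreatest {x : ℝ | (Gpoly r t).eval x = 0} lam)
    (hmu : IsGreatest {x : ℝ | (Fpoly r t).eval x = 0} mu) :
    lam < mu := by
  obtain ⟨m, hmg, hm0, hlt, hgt⟩ := Fpoly_key r hr t ht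
  have hmu' : mu = m := hmu.unique hmg
  subst hmu'
  by_contra h
  push_neg at h
  have h1 : (0:ℝ) < (Gpoly r t).eval lam := by
    have hsum : (Gpoly r t).eval lam
        = (∑ i ∈ Finset.range t, (Fpoly r i).eval lam) + (Fpoly r t).eval lam := by
      simp [Gpoly, eval_finset_sum, Finset.sum_range_succ]
    have hpos : 0 < ∑ i ∈ Finset.range t, (Fpoly r i).eval lam :=
      Finset.sum_pos (fun i hi => hlt i (Finset.mem_range.mp hi) lam h)
        ⟨0, Finset.mem_range.mpr ht⟩
    have hge : 0 ≤ (Fpoly r t).eval lam := by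
      rcases eq_or_lt_of_le h with he | hl
      · rw [← he]
        exact le_of_eq (hmg.1).symm
      · exact le_of_lt (hgt lam hl)
    linarith
  exact absurd hlam.1 (ne_of_gt h1)
end

section
/- Let r ≥ 3 and t ≥ 3. The largest root λ^{(t)} of G_t satisfies 2√(r−1)·cos(π/t) < λ^{(t)} < 2√(r−1)·cos(π/(t+1)). -/
open Polynomial

lemma Gpoly_succ (r : ℝ) (j : ℕ) : Gpoly r (j + 1) = Gpoly r j + Fpoly r (j + 1) := by
  rw [Gpoly, Gpoly, Finset.sum_range_succ]

lemma Gpoly_zero (r : ℝ) : Gpoly r 0 = 1 := by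
  simp [Gpoly, Fpoly]

lemma Gpoly_one (r : ℝ) : Gpoly r 1 = 1 + X := by
  simp [Gpoly, Fpoly, Finset.sum_range_succ]

lemma Grec (r : ℝ) : ∀ j, Gpoly r (j + 2) = X * Gpoly r (j + 1) - C (r - 1) * Gpoly r j := by
  intro j
  induction j with
  | zero =>
    show Gpoly r 2 = _
    simp [Gpoly, Finset.sum_range_succ, Fpoly, C_sub, C_1]
    ring_nf
  | succ n ih =>
    have h3 : Fpoly r (n + 3) = X * Fpoly r (n + 2) - C (r - 1) * Fpoly r (n + 1) := rfl
    have h4 := Gpoly_succ r n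
    rw [Gpoly_succ r (n + 2), Gpoly_succ r (n + 1), h3]
    rw [Gpoly_succ r (n + 1)] at ih
    linear_combination ih + C (r - 1) * h4

lemma Geval (r : ℝ) (x : ℝ) (j : ℕ) :
    (Gpoly r (j + 2)).eval x = x * (Gpoly r (j + 1)).eval x - (r - 1) * (Gpoly r j).eval x := by
  rw [Grec]; simp

lemma Geval_zero (r : ℝ) (x : ℝ) : (Gpoly r 0).eval x = 1 := by simp [Gpoly_zero]

lemma Geval_one (r : ℝ) (x : ℝ) : (Gpoly r 1).eval x = 1 + x := by simp [Gpoly_one]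

lemma sin_step (a θ : ℝ) :
    Real.sin ((a + 2) * θ) = 2 * Real.cos θ * Real.sin ((a + 1) * θ) - Real.sin (a * θ) := by
  have h1 : (a + 2) * θ = (a + 1) * θ + θ := by ring
  have h2 : a * θ = (a + 1) * θ - θ := by ring
  rw [h1, h2, Real.sin_add, Real.sin_sub]
  ring

lemma Gclosed (r : ℝ) (hr : 3 ≤ r) (θ : ℝ) :
    ∀ j : ℕ, Real.sin θ * (Gpoly r j).eval (2 * Real.sqrt (r - 1) * Real.cos θ)
        * Real.sqrt (r - 1)
      = Real.sqrt (r - 1) ^ (j + 1) * Real.sin (((j : ℝ) + 1) * θ)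
        + Real.sqrt (r - 1) ^ j * Real.sin ((j : ℝ) * θ) := by
  set q := Real.sqrt (r - 1) with hq
  have hq2 : q ^ 2 = r - 1 := Real.sq_sqrt (by linarith)
  have key : ∀ j : ℕ,
      (Real.sin θ * (Gpoly r j).eval (2 * q * Real.cos θ) * q
        = q ^ (j + 1) * Real.sin (((j : ℝ) + 1) * θ) + q ^ j * Real.sin ((j : ℝ) * θ)) ∧
      (Real.sin θ * (Gpoly r (j + 1)).eval (2 * q * Real.cos θ) * q
        = q ^ (j + 2) * Real.sin (((j : ℝ) + 2) * θ) + q ^ (j + 1) * Real.sin (((j : ℝ) + 1) * θ)) := by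
    intro j
    induction j with
    | zero =>
      constructor
      · rw [Geval_zero]; push_cast; simp; ring
      · rw [Geval_one]
        push_cast
        have h2 : ((0:ℝ) + 2) * θ = 2 * θ := by norm_num
        rw [h2, Real.sin_two_mul]
        ring
    | succ n ih =>
      obtain ⟨ih0, ih1⟩ := ih
      constructor
      · push_cast
        have e : ((n:ℝ) + 1 + 1) = (n:ℝ) + 2 := by ring
        rw [e]
        linear_combination ih1
      · rw [Geval r _ n]
        have s1 := sin_step ((n : ℝ) + 1) θ
        have s2 := sin_step ((n : ℝ)) θ
        push_cast
        have e : ((n:ℝ) + 1 + 1) = (n:ℝ) + 2 := by ring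
        rw [e] at s1 ⊢
        rw [← hq2]
        linear_combination (2 * q * Real.cos θ) * ih1 - q ^ 2 * ih0
          - q ^ (n + 3) * s1 - q ^ (n + 2) * s2
  intro j
  exact (key j).1

lemma Gpos_big (r : ℝ) (hr : 3 ≤ r) (x : ℝ) (hx : 2 * Real.sqrt (r - 1) ≤ x) :
    ∀ j : ℕ, 0 < (Gpoly r j).eval x ∧
      Real.sqrt (r - 1) * (Gpoly r j).eval x ≤ (Gpoly r (j + 1)).eval x := by
  set q := Real.sqrt (r - 1) with hq
  have hq2 : q ^ 2 = r - 1 := Real.sq_sqrt (by linarith)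
  have hqpos : 0 < q := Real.sqrt_pos.2 (by linarith)
  intro j
  induction j with
  | zero =>
    rw [Geval_zero, Geval_one]
    constructor
    · norm_num
    · nlinarith
  | succ n ih =>
    obtain ⟨h0, h1⟩ := ih
    have h1pos : 0 < (Gpoly r (n + 1)).eval x := lt_of_lt_of_le (by positivity) h1
    constructor
    · exact h1pos
    · rw [Geval r x n]
      nlinarith [h1, h0, h1pos, hqpos, hq2]

theorem largest_root_G_bounds (r : ℝ) (hr : 3 ≤ r) (t : ℕ) (ht : 3 ≤ t) (lam : ℝ)
    (hlam : IsGreatest {x : ℝ | (Gpoly r t).eval x = 0} lam) :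
    2 * Real.sqrt (r - 1) * Real.cos (Real.pi / t) < lam ∧
    lam < 2 * Real.sqrt (r - 1) * Real.cos (Real.pi / (t + 1)) := by
  set q := Real.sqrt (r - 1) with hq
  have hq2 : q ^ 2 = r - 1 := Real.sq_sqrt (by linarith)
  have hqpos : 0 < q := Real.sqrt_pos.2 (by linarith)
  have htR : (3 : ℝ) ≤ (t : ℝ) := by exact_mod_cast ht
  have htpos : (0 : ℝ) < t := by linarith
  have hpi := Real.pi_pos
  -- θ₀ = π/(t+1), θ₁ = π/t
  set θ₀ := Real.pi / ((t : ℝ) + 1) with hθ₀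
  set θ₁ := Real.pi / (t : ℝ) with hθ₁
  have hθ₀pos : 0 < θ₀ := by positivity
  have hθ₁pos : 0 < θ₁ := by positivity
  have hθ₁ltpi : θ₁ < Real.pi := by
    rw [hθ₁, div_lt_iff₀ htpos]; nlinarith
  have hθ₀ltθ₁ : θ₀ < θ₁ := by
    rw [hθ₀, hθ₁]
    apply div_lt_div_of_pos_left hpi htpos
    linarith
  -- positivity of G_t on [x₀, ∞) where x₀ = 2q cos θ₀
  have pos_on : ∀ x : ℝ, 2 * q * Real.cos θ₀ ≤ x → 0 < (Gpoly r t).eval x := by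
    intro x hx
    by_cases hx2 : x < 2 * q
    · -- trig case
      set θ := Real.arccos (x / (2 * q)) with hθ
      have hb1 : Real.cos θ₀ ≤ x / (2 * q) := by
        rw [le_div_iff₀ (by positivity)]; linarith
      have hb2 : x / (2 * q) < 1 := by
        rw [div_lt_one (by positivity)]; linarith
      have hbm1 : (-1 : ℝ) ≤ x / (2 * q) := by
        have := Real.neg_one_le_cos θ₀
        linarith
      have hcosθ : Real.cos θ = x / (2 * q) := Real.cos_arccos hbm1 (le_of_lt hb2)
      have hxeq : x = 2 * q * Real.cos θ := by
        rw [hcosθ]; field_simp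
      have hθpos : 0 < θ := Real.arccos_pos.2 hb2
      have hθle : θ ≤ θ₀ := by
        have h1 : Real.arccos (x / (2 * q)) ≤ Real.arccos (Real.cos θ₀) := by
          rw [Real.arccos_eq_pi_div_two_sub_arcsin, Real.arccos_eq_pi_div_two_sub_arcsin]
          have h2 : Real.arcsin (Real.cos θ₀) ≤ Real.arcsin (x / (2 * q)) :=
            Real.monotone_arcsin hb1
          linarith
        have h3 : Real.arccos (Real.cos θ₀) = θ₀ :=
          Real.arccos_cos (le_of_lt hθ₀pos) (by linarith)
        rw [← h3]; exact h1
      have hsinθ : 0 < Real.sin θ :=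
        Real.sin_pos_of_pos_of_lt_pi hθpos (by linarith)
      have hclosed := Gclosed r hr θ t
      rw [← hq, ← hxeq] at hclosed
      have hsin1 : 0 < Real.sin ((t : ℝ) * θ) := by
        apply Real.sin_pos_of_pos_of_lt_pi
        · positivity
        · calc (t : ℝ) * θ ≤ (t : ℝ) * θ₀ := by
                apply mul_le_mul_of_nonneg_left hθle (le_of_lt htpos)
            _ < Real.pi := by
                have hlt : (t : ℝ) * θ₀ < ((t : ℝ) + 1) * θ₀ := by nlinarith
                have heq : ((t : ℝ) + 1) * θ₀ = Real.pi := by rw [hθ₀]; field_simp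
                linarith
      have hsin2 : 0 ≤ Real.sin (((t : ℝ) + 1) * θ) := by
        apply Real.sin_nonneg_of_nonneg_of_le_pi
        · positivity
        · calc ((t : ℝ) + 1) * θ ≤ ((t : ℝ) + 1) * θ₀ := by
                apply mul_le_mul_of_nonneg_left hθle (by linarith)
            _ = Real.pi := by
                rw [hθ₀]; field_simp
      by_contra hE
      push_neg at hE
      have h1 : Real.sin θ * (Gpoly r t).eval x * q ≤ 0 := by
        nlinarith [mul_pos hsinθ hqpos]
      have h2 : 0 < q ^ (t + 1) * Real.sin (((t : ℝ) + 1) * θ) + q ^ t * Real.sin ((t : ℝ) * θ) :=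
        add_pos_of_nonneg_of_pos (mul_nonneg (pow_pos hqpos (t + 1)).le hsin2)
          (mul_pos (pow_pos hqpos t) hsin1)
      linarith
    · -- x ≥ 2q
      push_neg at hx2
      exact (Gpos_big r hr x hx2 t).1
  -- negativity at x₁ = 2q cos θ₁
  have neg_at : (Gpoly r t).eval (2 * q * Real.cos θ₁) < 0 := by
    have hclosed := Gclosed r hr θ₁ t
    rw [← hq] at hclosed
    have htθ : (t : ℝ) * θ₁ = Real.pi := by
      rw [hθ₁]; field_simp
    have ht1θ : ((t : ℝ) + 1) * θ₁ = Real.pi + θ₁ := by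
      rw [hθ₁]; field_simp
    have hsinpi : Real.sin ((t : ℝ) * θ₁) = 0 := by rw [htθ]; exact Real.sin_pi
    have hsin1 : Real.sin (((t : ℝ) + 1) * θ₁) = -Real.sin θ₁ := by
      rw [ht1θ, Real.sin_add, Real.sin_pi, Real.cos_pi]; ring
    have hsinθ₁ : 0 < Real.sin θ₁ :=
      Real.sin_pos_of_pos_of_lt_pi hθ₁pos hθ₁ltpi
    rw [hsinpi, hsin1] at hclosed
    by_contra hE
    push_neg at hE
    have hLHS : 0 ≤ Real.sin θ₁ * (Gpoly r t).eval (2 * q * Real.cos θ₁) * q :=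
      mul_nonneg (mul_nonneg hsinθ₁.le hE) hqpos.le
    have hRHS : q ^ (t + 1) * -Real.sin θ₁ + q ^ t * 0 < 0 := by
      nlinarith [pow_pos hqpos (t + 1)]
    linarith
  -- x₁ < x₀
  have hx1x0 : 2 * q * Real.cos θ₁ < 2 * q * Real.cos θ₀ := by
    have := Real.cos_lt_cos_of_nonneg_of_le_pi (le_of_lt hθ₀pos) (le_of_lt hθ₁ltpi) hθ₀ltθ₁
    nlinarith
  -- upper bound
  have hupper : lam < 2 * q * Real.cos θ₀ := by
    by_contra h
    push_neg at h
    have := pos_on lam h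
    have hroot := hlam.1
    simp only [Set.mem_setOf_eq] at hroot
    linarith
  -- lower bound via IVT
  have hlower : 2 * q * Real.cos θ₁ < lam := by
    have hcont : ContinuousOn (fun x => (Gpoly r t).eval x)
        (Set.Icc (2 * q * Real.cos θ₁) (2 * q * Real.cos θ₀)) :=
      ((Gpoly r t).continuous).continuousOn
    have hmem : (0 : ℝ) ∈ Set.Icc ((Gpoly r t).eval (2 * q * Real.cos θ₁))
        ((Gpoly r t).eval (2 * q * Real.cos θ₀)) := by
      constructor
      · exact le_of_lt neg_at
      · exact le_of_lt (pos_on _ (le_refl _))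
    obtain ⟨c, hc, hc0⟩ := intermediate_value_Icc (le_of_lt hx1x0) hcont hmem
    have hclam : c ≤ lam := hlam.2 hc0
    have : 2 * q * Real.cos θ₁ < c := by
      rcases lt_or_eq_of_le hc.1 with h | h
      · exact h
      · exfalso; rw [← h] at hc0; linarith
    linarith
  exact ⟨hlower, hupper⟩
end
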